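/- arXiv:2507.00018 — 3 statements merged into one kernel-verified Lean document; each statement's English description precedes it below -/
import Mathlib

section
/- In a deterministic finite-horizon MDP with entropy regularization, let r₁(s,a) be a reward function and let r₂(s,a) = r₁(s,a) + γ Φ(s') − Φ(s), where s' is the deterministic successor of (s,a), be the potential-based shaped reward with Φ = 0 at terminal states; then the soft value functions satisfy V₂(s) = V₁(s) − Φ(s), and the optimal soft (softmax) policy is unchanged. -/
open Real Finset

/-- Potential-based reward shaping r₂ = r₁ + γΦ(s') − Φ(s) in a deterministic
MDP shifts the soft value function by V₂ = V₁ − Φ and leaves the optimal soft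
(softmax) policy unchanged. -/
theorem potential_shaping_soft
    {S A : Type*} [Fintype A] [Nonempty A]
    (T : S → A → S) (γ : ℝ) (hγ0 : 0 < γ) (hγ1 : γ ≤ 1)
    (Φ : S → ℝ)
    (terminal : S → Prop) (hterm : ∀ s, terminal s → Φ s = 0)
    (r₁ r₂ : S → A → ℝ)
    (hr : ∀ s a, r₂ s a = r₁ s a + γ * Φ (T s a) - Φ s)
    (V₁ : S → ℝ)
    (hV₁ : ∀ s, V₁ s = Real.log (∑ a, Real.exp (r₁ s a + γ * V₁ (T s a)))) :
    (∀ s, V₁ s - Φ s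
        = Real.log (∑ a, Real.exp (r₂ s a + γ * (V₁ (T s a) - Φ (T s a))))) ∧
    (∀ s a,
      Real.exp (r₂ s a + γ * (V₁ (T s a) - Φ (T s a)))
          / (∑ a', Real.exp (r₂ s a' + γ * (V₁ (T s a') - Φ (T s a'))))
        = Real.exp (r₁ s a + γ * V₁ (T s a))
          / (∑ a', Real.exp (r₁ s a' + γ * V₁ (T s a')))) := by
  have key : ∀ s a, r₂ s a + γ * (V₁ (T s a) - Φ (T s a))
      = (r₁ s a + γ * V₁ (T s a)) - Φ s := by
    intro s a; rw [hr]; ring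
  have hexp : ∀ s a, Real.exp (r₂ s a + γ * (V₁ (T s a) - Φ (T s a)))
      = Real.exp (r₁ s a + γ * V₁ (T s a)) * Real.exp (-Φ s) := by
    intro s a; rw [key, ← Real.exp_add]; ring_nf
  have hsum : ∀ s, (∑ a, Real.exp (r₂ s a + γ * (V₁ (T s a) - Φ (T s a))))
      = (∑ a, Real.exp (r₁ s a + γ * V₁ (T s a))) * Real.exp (-Φ s) := by
    intro s
    simp only [hexp]
    rw [← Finset.sum_mul]
  have hpos : ∀ s, 0 < ∑ a, Real.exp (r₁ s a + γ * V₁ (T s a)) := fun s =>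
    Finset.sum_pos (fun a _ => Real.exp_pos _) Finset.univ_nonempty
  constructor
  · intro s
    rw [hsum, Real.log_mul (hpos s).ne' (Real.exp_pos _).ne', Real.log_exp, ← hV₁]; ring
  · intro s a
    rw [hexp, hsum, mul_div_mul_right _ _ (Real.exp_pos (-Φ s)).ne']
end

section
/- In a deterministic MDP, if V(s_t) = 0 for all t > 0 and r(s,a) = β log(π(a|s)/π_ref(a|s)) + V(s) − V(s'), then the total reward of any complete trajectory from s₀ equals β log(π(y|x)/π_ref(y|x)) + V(s₀), where π(y|x) is the product of per-token policy probabilities along the trajectory. -/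
open Real Finset

/-- In a deterministic token-level MDP with V(s_t) = 0 for all non-initial
states, the total reward of a complete trajectory equals
β log(pol(y|x)/π_ref(y|x)) + V(s₀), where pol(y|x) = Π_t pol(a_t|s_t). -/
theorem trajectory_reward_eq_logratio_plus_V0
    {Tok : Type*}
    (β : ℝ) (hβ : 0 < β)
    (pol πref : List Tok → Tok → ℝ)
    (hπpos : ∀ s a, 0 < pol s a) (hrefpos : ∀ s a, 0 < πref s a)
    (V : List Tok → ℝ)
    (r : List Tok → Tok → ℝ)
    (hr : ∀ s a, r s a = β * Real.log (pol s a / πref s a)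
        + V s - V (s ++ [a]))
    (T : ℕ) (hT : 1 ≤ T) (a : ℕ → Tok) (st : ℕ → List Tok)
    (hstep : ∀ t, st (t + 1) = st t ++ [a t])
    (hV : ∀ t, 0 < t → V (st t) = 0) :
    ∑ t ∈ Finset.range T, r (st t) (a t)
      = β * Real.log ((∏ t ∈ Finset.range T, pol (st t) (a t))
            / ∏ t ∈ Finset.range T, πref (st t) (a t))
        + V (st 0) := by
  have hppos : 0 < ∏ t ∈ Finset.range T, pol (st t) (a t) :=
    Finset.prod_pos fun t _ => hπpos _ _
  have hqpos : 0 < ∏ t ∈ Finset.range T, πref (st t) (a t) :=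
    Finset.prod_pos fun t _ => hrefpos _ _
  have hlog : Real.log ((∏ t ∈ Finset.range T, pol (st t) (a t))
      / ∏ t ∈ Finset.range T, πref (st t) (a t))
      = ∑ t ∈ Finset.range T, Real.log (pol (st t) (a t) / πref (st t) (a t)) := by
    rw [Real.log_div hppos.ne' hqpos.ne',
      Real.log_prod (fun t _ => (hπpos _ _).ne'),
      Real.log_prod (fun t _ => (hrefpos _ _).ne'), ← Finset.sum_sub_distrib]
    exact Finset.sum_congr rfl fun t _ => by
      rw [Real.log_div (hπpos _ _).ne' (hrefpos _ _).ne']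
  have hsum : ∑ t ∈ Finset.range T, r (st t) (a t)
      = ∑ t ∈ Finset.range T,
          (β * Real.log (pol (st t) (a t) / πref (st t) (a t))
            + (V (st t) - V (st (t + 1)))) := by
    refine Finset.sum_congr rfl fun t _ => ?_
    rw [hr, hstep]; ring
  rw [hsum, Finset.sum_add_distrib, Finset.sum_range_sub' (fun t => V (st t)),
    hV T (by omega), hlog, Finset.mul_sum]
  ring
end

section
/- For the Jensen–Shannon divergence generator f(u) = u log u − (u+1) log((u+1)/2), the convex conjugate is f*(t) = −log(2 − e^t) for t < log 2, and the induced variational objective Σ_x P(x) g(x) + Σ_x Q(x) log(2 − e^{g(x)}) is maximized at g(x) = log(2P(x)/(P(x)+Q(x))). -/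
open Real Finset

private lemma js_pointwise_bound (p q g : ℝ) (hp : 0 < p) (hq : 0 < q)
    (hg : g < Real.log 2) :
    p * g + q * Real.log (2 - Real.exp g)
      ≤ p * Real.log (2 * p / (p + q)) + q * Real.log (2 * q / (p + q)) := by
  set a := Real.exp g with hadef
  have ha : 0 < a := Real.exp_pos g
  have ha2 : a < 2 := by
    calc a < Real.exp (Real.log 2) := Real.exp_lt_exp.2 hg
    _ = 2 := Real.exp_log (by norm_num)
  have hpq : 0 < p + q := by linarith
  have hga : g = Real.log a := (Real.log_exp g).symm
  have h1 : Real.log (a * (p + q) / (2 * p)) ≤ a * (p + q) / (2 * p) - 1 :=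
    Real.log_le_sub_one_of_pos (by positivity)
  have h2a : (0:ℝ) < 2 - a := by linarith
  have h2 : Real.log ((2 - a) * (p + q) / (2 * q)) ≤ (2 - a) * (p + q) / (2 * q) - 1 :=
    Real.log_le_sub_one_of_pos (div_pos (mul_pos h2a hpq) (by positivity))
  have e1 : Real.log (a * (p + q) / (2 * p)) = Real.log a - Real.log (2 * p / (p + q)) := by
    rw [Real.log_div (by positivity) (by positivity), Real.log_div (by positivity) hpq.ne',
      Real.log_mul ha.ne' hpq.ne', Real.log_mul two_ne_zero hp.ne']
    ring
  have e2 : Real.log ((2 - a) * (p + q) / (2 * q))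
      = Real.log (2 - a) - Real.log (2 * q / (p + q)) := by
    rw [Real.log_div (mul_pos h2a hpq).ne' (by positivity), Real.log_div (by positivity) hpq.ne',
      Real.log_mul h2a.ne' hpq.ne', Real.log_mul two_ne_zero hq.ne']
    ring
  rw [e1] at h1; rw [e2] at h2
  have h1' := mul_le_mul_of_nonneg_left h1 hp.le
  have h2' := mul_le_mul_of_nonneg_left h2 hq.le
  have key : p * (a * (p + q) / (2 * p) - 1) + q * ((2 - a) * (p + q) / (2 * q) - 1) = 0 := by
    field_simp
    ring
  rw [hga]
  nlinarith [h1', h2', key]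

private lemma js_conj_ub (t u : ℝ) (ht : t < Real.log 2) (hu : 0 < u) :
    t * u - (u * Real.log u - (u + 1) * Real.log ((u + 1) / 2))
      ≤ -Real.log (2 - Real.exp t) := by
  set a := Real.exp t with hadef
  have ha : 0 < a := Real.exp_pos t
  have ha2 : a < 2 := by
    calc a < Real.exp (Real.log 2) := Real.exp_lt_exp.2 ht
    _ = 2 := Real.exp_log (by norm_num)
  have hu1 : (0:ℝ) < u + 1 := by linarith
  have h1 : Real.log (a * (u + 1) / (2 * u)) ≤ a * (u + 1) / (2 * u) - 1 :=
    Real.log_le_sub_one_of_pos (by positivity)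
  have h2a : (0:ℝ) < 2 - a := by linarith
  have h2 : Real.log ((2 - a) * (u + 1) / 2) ≤ (2 - a) * (u + 1) / 2 - 1 :=
    Real.log_le_sub_one_of_pos (div_pos (mul_pos h2a hu1) two_pos)
  have e1 : Real.log (a * (u + 1) / (2 * u)) =
      Real.log a + Real.log (u + 1) - Real.log 2 - Real.log u := by
    rw [Real.log_div (by positivity) (by positivity), Real.log_mul ha.ne' hu1.ne',
      Real.log_mul two_ne_zero hu.ne']
    ring
  have e2 : Real.log ((2 - a) * (u + 1) / 2) =
      Real.log (2 - a) + Real.log (u + 1) - Real.log 2 := by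
    rw [Real.log_div (mul_pos h2a hu1).ne' two_ne_zero,
      Real.log_mul h2a.ne' hu1.ne']
  have e3 : Real.log ((u + 1) / 2) = Real.log (u + 1) - Real.log 2 :=
    Real.log_div hu1.ne' two_ne_zero
  have e4 : t = Real.log a := (Real.log_exp t).symm
  rw [e1] at h1; rw [e2] at h2
  have h1' := mul_le_mul_of_nonneg_left h1 hu.le
  have key : u * (a * (u + 1) / (2 * u) - 1) + ((2 - a) * (u + 1) / 2 - 1) = 0 := by
    field_simp
    ring
  rw [e3, e4]
  nlinarith [h1', h2, key]

/-- For the Jensen–Shannon generator f(u) = u log u − (u+1) log((u+1)/2),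
the convex conjugate is f*(t) = −log(2 − eᵗ) on t < log 2, and the induced
variational objective Σ P g + Σ Q log(2 − e^g) is maximized (with maximum
attained) at g(x) = log(2P(x)/(P(x)+Q(x))). -/
theorem js_conjugate_and_variational
    {X : Type*} [Fintype X]
    (P Q : X → ℝ) (hPpos : ∀ x, 0 < P x) (hP : ∑ x, P x = 1)
    (hQpos : ∀ x, 0 < Q x) (hQ : ∑ x, Q x = 1) :
    (∀ t : ℝ, t < Real.log 2 →
      IsLUB {v : ℝ | ∃ u : ℝ, 0 < u ∧
          v = t * u - (u * Real.log u - (u + 1) * Real.log ((u + 1) / 2))}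
        (-Real.log (2 - Real.exp t))) ∧
    IsGreatest
      {v : ℝ | ∃ g : X → ℝ, (∀ x, g x < Real.log 2) ∧
        v = (∑ x, P x * g x) + ∑ x, Q x * Real.log (2 - Real.exp (g x))}
      ((∑ x, P x * Real.log (2 * P x / (P x + Q x)))
        + ∑ x, Q x * Real.log (2 * Q x / (P x + Q x)))
    ∧
    ((∑ x, P x * Real.log (2 * P x / (P x + Q x)))
        + (∑ x, Q x * Real.log (2 - Real.exp (Real.log (2 * P x / (P x + Q x)))))
      = (∑ x, P x * Real.log (2 * P x / (P x + Q x)))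
        + ∑ x, Q x * Real.log (2 * Q x / (P x + Q x))) := by
  have hpq : ∀ x, 0 < P x + Q x := fun x => by have := hPpos x; have := hQpos x; linarith
  have hfrac : ∀ x, 0 < 2 * P x / (P x + Q x) := fun x => by
    have := hPpos x; have := hpq x; positivity
  have hfrac2 : ∀ x, 2 * P x / (P x + Q x) < 2 := fun x => by
    have h := hpq x; have := hQpos x
    rw [div_lt_iff₀ h]; linarith
  have hexp : ∀ x, Real.exp (Real.log (2 * P x / (P x + Q x))) = 2 * P x / (P x + Q x) :=
    fun x => Real.exp_log (hfrac x)
  have hcompl : ∀ x, 2 - 2 * P x / (P x + Q x) = 2 * Q x / (P x + Q x) := fun x => by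
    have h := (hpq x).ne'
    field_simp
    ring
  have hterm : ∀ x, Real.log (2 - Real.exp (Real.log (2 * P x / (P x + Q x))))
      = Real.log (2 * Q x / (P x + Q x)) := fun x => by
    rw [hexp x, hcompl x]
  refine ⟨?_, ?_, ?_⟩
  · -- conjugate
    intro t ht
    have ha : 0 < Real.exp t := Real.exp_pos t
    have ha2 : Real.exp t < 2 := by
      calc Real.exp t < Real.exp (Real.log 2) := Real.exp_lt_exp.2 ht
      _ = 2 := Real.exp_log (by norm_num)
    have h2a : (0:ℝ) < 2 - Real.exp t := by linarith
    apply IsGreatest.isLUB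
    constructor
    · refine ⟨Real.exp t / (2 - Real.exp t), div_pos ha h2a, ?_⟩
      set a := Real.exp t with hadef
      set u := a / (2 - a) with hudef
      have hlogu : Real.log u = t - Real.log (2 - a) := by
        rw [hudef, Real.log_div ha.ne' h2a.ne', Real.log_exp]
      have hu1 : (u + 1) / 2 = (2 - a)⁻¹ := by
        rw [hudef]; field_simp; ring
      have hlog1 : Real.log ((u + 1) / 2) = -Real.log (2 - a) := by
        rw [hu1, Real.log_inv]
      rw [hlogu, hlog1]
      ring
    · rintro v ⟨u, hu, rfl⟩
      exact js_conj_ub t u ht hu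
  · -- variational IsGreatest
    constructor
    · refine ⟨fun x => Real.log (2 * P x / (P x + Q x)), fun x => ?_, ?_⟩
      · exact Real.log_lt_log (hfrac x) (hfrac2 x) |>.trans_le
          (le_of_eq rfl)
      · congr 1
        exact Finset.sum_congr rfl fun x _ => by rw [hterm x]
    · rintro v ⟨g, hg, rfl⟩
      rw [← Finset.sum_add_distrib, ← Finset.sum_add_distrib]
      exact Finset.sum_le_sum fun x _ =>
        js_pointwise_bound (P x) (Q x) (g x) (hPpos x) (hQpos x) (hg x)
  · -- value identity
    congr 1
    exact Finset.sum_congr rfl fun x _ => by rw [hterm x]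
end
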